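/- Let X be a locally ordered space whose underlying topology is Hausdorff, and ∗ ∈ X. In the category of locally ordered spaces with Hausdorff underlying topology and locally increasing maps, the pair i_∗, c_∗ : S¹ → S⃗¹ × X (where i_∗(s) = (s,∗) and c_∗(s) = (1,∗)) has a coequalizer if, and only if, the family of clopen neighbourhoods of ∗ in X has a smallest element O; in that case q_O : S⃗¹ × X → X_O is the coequalizer. -/

import Mathlib

universe u v w v'

/-! ## Ordered bases and locally ordered spaces -/

/-- An *ordered subset* of `X`: a pair of a carrier set and a relation on `X`
(intended to be a partial order on the carrier). -/
structure OSet (X : Type u) : Type u where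
  carrier : Set X
  le : X → X → Prop

namespace OSet

variable {X : Type u} {Y : Type v}

/-- `B` is a partially ordered subset: the relation only relates elements of the
carrier, is reflexive on the carrier, antisymmetric and transitive. -/
def IsPoset (B : OSet X) : Prop :=
  (∀ p q, B.le p q → p ∈ B.carrier ∧ q ∈ B.carrier) ∧
  (∀ p ∈ B.carrier, B.le p p) ∧
  (∀ p q, B.le p q → B.le q p → p = q) ∧
  (∀ p q r, B.le p q → B.le q r → B.le p r)

/-- `B ⊆_lax B'`. -/
def laxSub (B B' : OSet X) : Prop :=
  B.carrier ⊆ B'.carrier ∧ ∀ p q, B.le p q → B'.le p q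

/-- `B ⊆_str B'` : the carrier is included and `≤_B` is the restriction of `≤_{B'}`
to the carrier of `B`. -/
def strSub (B B' : OSet X) : Prop :=
  B.carrier ⊆ B'.carrier ∧ ∀ p ∈ B.carrier, ∀ q ∈ B.carrier, (B.le p q ↔ B'.le p q)

/-- Product of two ordered subsets, with the product order. -/
def prod (B : OSet X) (B' : OSet Y) : OSet (X × Y) where
  carrier := B.carrier ×ˢ B'.carrier
  le p q := B.le p.1 q.1 ∧ B'.le p.2 q.2

/-- The restriction of an ordered subset to a subset `S` (of its carrier). -/
def restrict (B : OSet X) (S : Set X) : OSet X where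
  carrier := S
  le p q := B.le p q ∧ p ∈ S ∧ q ∈ S

/-- `B` is a Nachbin ordered (sub)space: its order is closed in the product of the
subspace `B.carrier` (with the topology inherited from `X`) with itself. -/
def IsNachbin [TopologicalSpace X] (B : OSet X) : Prop :=
  IsClosed {p : B.carrier × B.carrier | B.le p.1 p.2}

end OSet

/-- `𝔅` is an *ordered basis* on the topological space `X`. -/
structure IsOrderedBasis {X : Type u} [TopologicalSpace X] (𝔅 : Set (OSet X)) : Prop where
  isPoset : ∀ B ∈ 𝔅, B.IsPoset
  isBasis : TopologicalSpace.IsTopologicalBasis (OSet.carrier '' 𝔅)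
  compat : ∀ x : X, ∀ B ∈ 𝔅, ∀ B' ∈ 𝔅, x ∈ B.carrier → x ∈ B'.carrier →
    ∃ B'' ∈ 𝔅, x ∈ B''.carrier ∧ B''.carrier ⊆ B.carrier ∩ B'.carrier ∧
      ∀ p q, B''.le p q → B.le p q ∧ B'.le p q

/-- `𝔅` is a *strict* ordered basis: the interpolating element `B''` can be chosen
with `B'' ⊆_str B` and `B'' ⊆_str B'`. -/
def IsStrictOrderedBasis {X : Type u} [TopologicalSpace X] (𝔅 : Set (OSet X)) : Prop :=
  IsOrderedBasis 𝔅 ∧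
    ∀ x : X, ∀ B ∈ 𝔅, ∀ B' ∈ 𝔅, x ∈ B.carrier → x ∈ B'.carrier →
      ∃ B'' ∈ 𝔅, x ∈ B''.carrier ∧ B''.strSub B ∧ B''.strSub B'

/-- `𝔅'` is coarser than `𝔅`. -/
def CoarserThan {X : Type u} (𝔅' 𝔅 : Set (OSet X)) : Prop :=
  ∀ x : X, ∀ B' ∈ 𝔅', x ∈ B'.carrier → ∃ B ∈ 𝔅, x ∈ B.carrier ∧ B.laxSub B'

/-- `𝔅'` is strictly coarser than `𝔅` (`⊆_lax` replaced by `⊆_str`). -/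
def StrictCoarserThan {X : Type u} (𝔅' 𝔅 : Set (OSet X)) : Prop :=
  ∀ x : X, ∀ B' ∈ 𝔅', x ∈ B'.carrier → ∃ B ∈ 𝔅, x ∈ B.carrier ∧ B.strSub B'

/-- Two ordered bases are equivalent when each is coarser than the other. -/
def EquivBases {X : Type u} (𝔅 𝔅' : Set (OSet X)) : Prop :=
  CoarserThan 𝔅' 𝔅 ∧ CoarserThan 𝔅 𝔅'

/-- Strict equivalence of ordered bases. -/
def StrictEquivBases {X : Type u} (𝔅 𝔅' : Set (OSet X)) : Prop :=
  StrictCoarserThan 𝔅' 𝔅 ∧ StrictCoarserThan 𝔅 𝔅'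

/-- The *open posets* `Ō(𝔅)` determined by an ordered basis `𝔅`. -/
def openPosets {X : Type u} (𝔅 : Set (OSet X)) : Set (OSet X) :=
  {A | ∀ x ∈ A.carrier, ∃ B ∈ 𝔅, x ∈ B.carrier ∧ B.laxSub A}

/-- `f` is locally increasing at `x`, w.r.t. the ordered bases `𝔅` (source) and
`𝔅'` (target). -/
def LocIncrAt {X : Type u} {Y : Type v} (𝔅 : Set (OSet X)) (𝔅' : Set (OSet Y))
    (f : X → Y) (x : X) : Prop :=
  ∀ B' ∈ 𝔅', f x ∈ B'.carrier →
    ∃ B ∈ 𝔅, x ∈ B.carrier ∧ (∀ p ∈ B.carrier, f p ∈ B'.carrier) ∧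
      ∀ p q, B.le p q → B'.le (f p) (f q)

/-- `f` is locally increasing. -/
def LocIncr {X : Type u} {Y : Type v} (𝔅 : Set (OSet X)) (𝔅' : Set (OSet Y))
    (f : X → Y) : Prop :=
  ∀ x : X, LocIncrAt 𝔅 𝔅' f x

/-- The locally ordered space given by the basis `𝔅` is locally Nachbin. -/
def IsLocallyNachbin {X : Type u} [TopologicalSpace X] (𝔅 : Set (OSet X)) : Prop :=
  ∀ x : X, ∀ O ∈ openPosets 𝔅, x ∈ O.carrier →
    ∃ O' ∈ openPosets 𝔅, x ∈ O'.carrier ∧ O'.laxSub O ∧ O'.IsNachbin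

/-- The product ordered basis on `X × Y`. -/
def prodBasis {X : Type u} {Y : Type v} (𝔅 : Set (OSet X)) (𝔅' : Set (OSet Y)) :
    Set (OSet (X × Y)) :=
  {C | ∃ B ∈ 𝔅, ∃ B' ∈ 𝔅', C = B.prod B'}

/-- A topological space viewed as a locally ordered space: all its open subsets,
each ordered by equality. -/
def trivBasis (T : Type v) [TopologicalSpace T] : Set (OSet T) :=
  {B | ∃ U : Set T, IsOpen U ∧ B = ⟨U, fun p q => p = q ∧ p ∈ U⟩}

/-! ## The directed circle -/

/-- The proper open arc `{e^{ix} : a < x < b}` of the unit circle, with its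
standard partial order. -/
def arcOSet (a b : ℝ) : OSet Circle where
  carrier := Circle.exp '' Set.Ioo a b
  le p q := ∃ x ∈ Set.Ioo a b, ∃ y ∈ Set.Ioo a b, x ≤ y ∧ Circle.exp x = p ∧ Circle.exp y = q

/-- The strict ordered basis of the directed circle `S⃗¹`: all proper open arcs
with their standard orders. -/
def dCircleBasis : Set (OSet Circle) :=
  {B | ∃ a b : ℝ, 0 < b - a ∧ b - a < 2 * Real.pi ∧ B = arcOSet a b}

/-- `K(f) = {t | ∀ s s', f (s,t) = f (s',t)}`. -/
def Kset {X : Type u} {Y : Type v} (f : Circle × X → Y) : Set X :=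
  {t | ∀ s s' : Circle, f (s, t) = f (s', t)}

/-! ## The space `X_O` -/

/-- The underlying set of `X_O := O ⊔ (S¹ × (X ∖ O))`. -/
def XO (X : Type u) (O : Set X) : Type u := ↥O ⊕ (Circle × ↥(Oᶜ))

open Classical in
/-- The map `q_O : S¹ × X → X_O`. -/
noncomputable def qO {X : Type u} (O : Set X) : Circle × X → XO X O := fun p =>
  if h : p.2 ∈ O then Sum.inl ⟨p.2, h⟩ else Sum.inr (p.1, ⟨p.2, h⟩)

/-- `X_O` carries the final topology of `q_O`. -/
noncomputable instance XO.topology {X : Type u} [TopologicalSpace X] (O : Set X) :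
    TopologicalSpace (XO X O) :=
  TopologicalSpace.coinduced (qO O) inferInstance

/-- The subset `U_{α,A}` of `X_O` (for `αc` a set of points of the circle and
`A` a subset of `X`). -/
def USet {X : Type u} (O : Set X) (αc : Set Circle) (A : Set X) : Set (XO X O) :=
  Sum.inl '' {t : ↥O | (t : X) ∈ A} ∪
    Sum.inr '' {p : Circle × ↥(Oᶜ) | p.1 ∈ αc ∧ (p.2 : X) ∈ A}

/-- The second component of an element of `X_O`. -/
def XO.p2 {X : Type u} {O : Set X} : XO X O → X :=
  Sum.elim (fun t => (t : X)) (fun p => (p.2 : X))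

/-- The relation `≤¹_{α,A}` on `X_O`: the image under `q_O` of the product order
on `α × A`. -/
def leOne {X : Type u} (O : Set X) (α : OSet Circle) (A : OSet X) (u u' : XO X O) : Prop :=
  ∃ x x' : Circle × X, α.le x.1 x'.1 ∧ A.le x.2 x'.2 ∧ qO O x = u ∧ qO O x' = u'

/-- The relation `⊑` on `X_O`. -/
def sqsub {X : Type u} (O : Set X) (α : OSet Circle) (A : OSet X) (u u' : XO X O) : Prop :=
  A.le (XO.p2 u) (XO.p2 u') ∧
    ((∃ t : ↥O, u = Sum.inl t) ∨ (∃ t : ↥O, u' = Sum.inl t) ∨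
      ∃ (s s' : Circle) (t t' : ↥(Oᶜ)),
        u = Sum.inr (s, t) ∧ u' = Sum.inr (s', t') ∧ α.le s s')

/-- The poset `(U_{α,A}, ≤_{α,A})`, where `≤_{α,A}` is the transitive closure of
`≤¹_{α,A}`. -/
def UOSet {X : Type u} (O : Set X) (α : OSet Circle) (A : OSet X) : OSet (XO X O) where
  carrier := USet O α.carrier A.carrier
  le := Relation.TransGen (leOne O α A)

/-- The ordered basis of `X_O`: the posets `(U_{α,A}, ≤_{α,A})` for `α` a proper
open arc and `A` an open poset of `X`. -/
def XOBasis {X : Type u} (𝔅 : Set (OSet X)) (O : Set X) : Set (OSet (XO X O)) :=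
  {C | ∃ a b : ℝ, 0 < b - a ∧ b - a < 2 * Real.pi ∧
    ∃ A ∈ openPosets 𝔅, C = UOSet O (arcOSet a b) A}

/-! ## The category of locally ordered spaces -/

/-- A bundled locally ordered space (an object of the category `LPO`). -/
structure LocOrdSpace : Type (u + 1) where
  carrier : Type u
  top : TopologicalSpace carrier
  basis : Set (OSet carrier)
  isBasis : @IsOrderedBasis carrier top basis

/-- `g : B → C` is the coequalizer of `i, j : A → B` in the full subcategory of
locally ordered spaces (at universe `u`) whose objects satisfy `P`: `g` is locally
increasing, coequalizes `i` and `j`, and every locally increasing map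
`f : B → Y` (for `Y` an object satisfying `P`) with `f ∘ i = f ∘ j` factors
through `g` by a unique locally increasing map. -/
def IsCoeqIn (P : LocOrdSpace.{u} → Prop) {A : Type w} {B : Type v} {C : Type v'}
    (𝔅 : Set (OSet B)) (ℭ : Set (OSet C)) (i j : A → B) (g : B → C) : Prop :=
  LocIncr 𝔅 ℭ g ∧ g ∘ i = g ∘ j ∧
    ∀ Y : LocOrdSpace.{u}, P Y → ∀ f : B → Y.carrier,
      LocIncr 𝔅 Y.basis f → f ∘ i = f ∘ j →
        ∃! h : C → Y.carrier, LocIncr ℭ Y.basis h ∧ f = h ∘ g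

/-!
For a locally increasing `f : S⃗¹ × X → Y` into a Hausdorff space, let `K(f)` be the set of
points `t` over which `f` is constant on the circle `S¹ × {t}`. It is closed because `Y` is
Hausdorff, and open because near a point of `K(f)` every circle is mapped, locally increasingly,
into one poset of `Y`, and a locally increasing loop in a poset is constant. If `f ∘ i⋆ = f ∘ c⋆`
then `⋆ ∈ K(f)`, so when `O` is the smallest clopen neighbourhood of `⋆`, `f` factors through
`q_O`, which collapses exactly the circles over `O`. Conversely, if `g` is a coequalizer, then
`q_U` factors through `g` for every clopen neighbourhood `U` of `⋆`, so `K(g) ⊆ K(q_U) = U`, and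
`K(g)` is the smallest clopen neighbourhood of `⋆`.
-/

open Set Real

lemma OSet.laxSub.trans {X : Type u} {B₁ B₂ B₃ : OSet X} (h₁₂ : B₁.laxSub B₂)
    (h₂₃ : B₂.laxSub B₃) : B₁.laxSub B₃ :=
  ⟨h₁₂.1.trans h₂₃.1, fun p q h => h₂₃.2 p q (h₁₂.2 p q h)⟩

lemma IsOrderedBasis.of_laxSub {X : Type u} [TopologicalSpace X] {𝔅 : Set (OSet X)}
    (hposet : ∀ B ∈ 𝔅, B.IsPoset)
    (hbasis : TopologicalSpace.IsTopologicalBasis (OSet.carrier '' 𝔅))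
    (hcompat : ∀ x : X, ∀ B ∈ 𝔅, ∀ B' ∈ 𝔅, x ∈ B.carrier → x ∈ B'.carrier →
      ∃ B'' ∈ 𝔅, x ∈ B''.carrier ∧ B''.laxSub B ∧ B''.laxSub B') :
    IsOrderedBasis 𝔅 where
  isPoset := hposet
  isBasis := hbasis
  compat x B hB B' hB' hx hx' := by
    obtain ⟨B'', hB'', hxB'', h, h'⟩ := hcompat x B hB B' hB' hx hx'
    exact ⟨B'', hB'', hxB'', subset_inter h.1 h'.1, fun p q hpq => ⟨h.2 p q hpq, h'.2 p q hpq⟩⟩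

section OrderedBasis

variable {X : Type u} [TopologicalSpace X] {𝔅 : Set (OSet X)}

lemma IsOrderedBasis.isOpen_carrier (h𝔅 : IsOrderedBasis 𝔅) {B : OSet X} (hB : B ∈ 𝔅) :
    IsOpen B.carrier :=
  h𝔅.isBasis.isOpen (mem_image_of_mem _ hB)

lemma IsOrderedBasis.exists_subset_of_mem_open (h𝔅 : IsOrderedBasis 𝔅) {V : Set X}
    (hV : IsOpen V) {t : X} (ht : t ∈ V) : ∃ B ∈ 𝔅, t ∈ B.carrier ∧ B.carrier ⊆ V := by
  obtain ⟨_, ⟨B, hB, rfl⟩, htB, hBV⟩ := h𝔅.isBasis.exists_subset_of_mem_open ht hV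
  exact ⟨B, hB, htB, hBV⟩

lemma IsOrderedBasis.exists_laxSub_subset_of_mem_open (h𝔅 : IsOrderedBasis 𝔅) {B : OSet X}
    (hB : B ∈ 𝔅) {V : Set X} (hV : IsOpen V) {t : X} (htB : t ∈ B.carrier) (htV : t ∈ V) :
    ∃ B' ∈ 𝔅, t ∈ B'.carrier ∧ B'.carrier ⊆ V ∧ B'.laxSub B := by
  obtain ⟨B₁, hB₁, htB₁, hB₁V⟩ := h𝔅.exists_subset_of_mem_open hV htV
  obtain ⟨B', hB', htB', hsub, hle⟩ := h𝔅.compat t B hB B₁ hB₁ htB htB₁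
  exact ⟨B', hB', htB', fun x hx => hB₁V (hsub hx).2,
    fun x hx => (hsub hx).1, fun p q h => (hle p q h).1⟩

lemma IsOrderedBasis.le_refl (h𝔅 : IsOrderedBasis 𝔅) {B : OSet X} (hB : B ∈ 𝔅) {t : X}
    (ht : t ∈ B.carrier) : B.le t t :=
  (h𝔅.isPoset B hB).2.1 t ht

lemma IsOrderedBasis.exists_laxSub_laxSub (h𝔅 : IsOrderedBasis 𝔅) {B B' : OSet X} (hB : B ∈ 𝔅)
    (hB' : B' ∈ 𝔅) {t : X} (ht : t ∈ B.carrier) (ht' : t ∈ B'.carrier) :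
    ∃ B'' ∈ 𝔅, t ∈ B''.carrier ∧ B''.laxSub B ∧ B''.laxSub B' := by
  obtain ⟨B'', hB'', htB'', hsub, hle⟩ := h𝔅.compat t B hB B' hB' ht ht'
  exact ⟨B'', hB'', htB'', ⟨fun x hx => (hsub hx).1, fun p q h => (hle p q h).1⟩,
    ⟨fun x hx => (hsub hx).2, fun p q h => (hle p q h).2⟩⟩

end OrderedBasis

lemma basis_mem_openPosets {X : Type u} {𝔅 : Set (OSet X)} {B : OSet X} (hB : B ∈ 𝔅) :
    B ∈ openPosets 𝔅 :=
  fun _ hx => ⟨B, hB, hx, subset_rfl, fun _ _ h => h⟩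

lemma isTopologicalBasis_prodBasis {X : Type u} {Y : Type v} [TopologicalSpace X]
    [TopologicalSpace Y] {𝔅 : Set (OSet X)} {𝔅' : Set (OSet Y)}
    (h𝔅 : TopologicalSpace.IsTopologicalBasis (OSet.carrier '' 𝔅))
    (h𝔅' : TopologicalSpace.IsTopologicalBasis (OSet.carrier '' 𝔅')) :
    TopologicalSpace.IsTopologicalBasis (OSet.carrier '' prodBasis 𝔅 𝔅') := by
  convert h𝔅.prod h𝔅' using 1
  ext w
  constructor
  · rintro ⟨_, ⟨B, hB, B', hB', rfl⟩, rfl⟩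
    exact ⟨B.carrier, mem_image_of_mem _ hB, B'.carrier, mem_image_of_mem _ hB', rfl⟩
  · rintro ⟨_, ⟨B, hB, rfl⟩, _, ⟨B', hB', rfl⟩, rfl⟩
    exact ⟨B.prod B', ⟨B, hB, B', hB', rfl⟩, rfl⟩

section LocIncr

variable {Z : Type v} {W : Type w}

lemma LocIncr.mono_source {𝔅₁ 𝔅₂ : Set (OSet Z)} {ℭ : Set (OSet W)} {f : Z → W}
    (hf : LocIncr 𝔅₁ ℭ f) (h : 𝔅₁ ⊆ 𝔅₂) : LocIncr 𝔅₂ ℭ f := by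
  intro x B' hB' hx
  obtain ⟨B, hB, hxB⟩ := hf x B' hB' hx
  exact ⟨B, h hB, hxB⟩

lemma LocIncr.anti_target {𝔅 : Set (OSet Z)} {ℭ₁ ℭ₂ : Set (OSet W)} {f : Z → W}
    (hf : LocIncr 𝔅 ℭ₂ f) (h : ℭ₁ ⊆ ℭ₂) : LocIncr 𝔅 ℭ₁ f :=
  fun x B' hB' => hf x B' (h hB')

lemma LocIncr.continuous [TopologicalSpace Z] [TopologicalSpace W] {𝔅 : Set (OSet Z)}
    {ℭ : Set (OSet W)} (h𝔅 : ∀ B ∈ 𝔅, IsOpen B.carrier)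
    (hℭ : TopologicalSpace.IsTopologicalBasis (OSet.carrier '' ℭ)) {f : Z → W}
    (hf : LocIncr 𝔅 ℭ f) : Continuous f := by
  refine continuous_iff_continuousAt.2 fun x => Filter.tendsto_def.2 fun V hV => ?_
  obtain ⟨_, ⟨B', hB', rfl⟩, hfx, hB'V⟩ := hℭ.mem_nhds_iff.1 hV
  obtain ⟨B, hB, hxB, hmaps, -⟩ := hf x B' hB' hfx
  exact Filter.mem_of_superset ((h𝔅 B hB).mem_nhds hxB) fun p hp => hB'V (hmaps p hp)

end LocIncr

section DirectedCircle

lemma arcOSet_le_of_le {a b x y : ℝ} (hx : x ∈ Ioo a b) (hy : y ∈ Ioo a b) (hxy : x ≤ y) :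
    (arcOSet a b).le (Circle.exp x) (Circle.exp y) :=
  ⟨x, hx, y, hy, hxy, rfl, rfl⟩

lemma isOpen_arcOSet_carrier (a b : ℝ) : IsOpen (arcOSet a b).carrier :=
  isLocalHomeomorph_circleExp.isOpenMap _ isOpen_Ioo

lemma arcOSet_isPoset {a b : ℝ} (h : b - a < 2 * π) : (arcOSet a b).IsPoset := by
  have hinj : InjOn Circle.exp (Ioo a b) :=
    (Circle.exp_injOn_Ico h.le).mono Ioo_subset_Ico_self
  refine ⟨?_, ?_, ?_, ?_⟩
  · rintro _ _ ⟨x, hx, y, hy, -, rfl, rfl⟩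
    exact ⟨mem_image_of_mem _ hx, mem_image_of_mem _ hy⟩
  · rintro _ ⟨x, hx, rfl⟩
    exact arcOSet_le_of_le hx hx le_rfl
  · rintro _ _ ⟨x, hx, y, hy, hxy, rfl, rfl⟩ ⟨y', hy', x', hx', hyx, hy'e, hx'e⟩
    rw [hinj hy' hy hy'e, hinj hx' hx hx'e] at hyx
    rw [le_antisymm hxy hyx]
  · rintro _ _ _ ⟨x, hx, y, hy, hxy, rfl, rfl⟩ ⟨y', hy', z, hz, hyz, hy'e, rfl⟩
    rw [hinj hy' hy hy'e] at hyz
    exact arcOSet_le_of_le hx hz (hxy.trans hyz)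

lemma arcOSet_add_int_mul_two_pi (a b : ℝ) (m : ℤ) :
    arcOSet (a + m * (2 * π)) (b + m * (2 * π)) = arcOSet a b := by
  have hexp : ∀ x, Circle.exp (x + m * (2 * π)) = Circle.exp x :=
    Circle.periodic_exp.int_mul m
  simp only [arcOSet, ← image_add_const_Ioo, image_image, hexp, exists_mem_image,
    add_le_add_iff_right]

lemma exists_arcOSet_eq_of_exp_mem {a b x : ℝ} (h : Circle.exp x ∈ (arcOSet a b).carrier) :
    ∃ a' b', arcOSet a' b' = arcOSet a b ∧ b' - a' = b - a ∧ x ∈ Ioo a' b' := by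
  obtain ⟨y, hy, hyx⟩ := h
  obtain ⟨m, hm⟩ := Circle.exp_eq_exp.1 hyx.symm
  refine ⟨a + m * (2 * π), b + m * (2 * π), arcOSet_add_int_mul_two_pi a b m, by ring, ?_⟩
  rw [hm]
  exact ⟨by linarith [hy.1], by linarith [hy.2]⟩

lemma arcOSet_laxSub_of_le {a b c d : ℝ} (hac : a ≤ c) (hdb : d ≤ b) :
    (arcOSet c d).laxSub (arcOSet a b) := by
  have hsub : Ioo c d ⊆ Ioo a b := Ioo_subset_Ioo hac hdb
  refine ⟨image_mono hsub, ?_⟩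
  rintro _ _ ⟨x, hx, y, hy, hxy, rfl, rfl⟩
  exact arcOSet_le_of_le (hsub hx) (hsub hy) hxy

lemma arcOSet_mem_dCircleBasis {a b : ℝ} (h₀ : 0 < b - a) (h₁ : b - a < 2 * π) :
    arcOSet a b ∈ dCircleBasis :=
  ⟨a, b, h₀, h₁, rfl⟩

lemma exists_mem_dCircleBasis_subset_of_mem_open {U : Set Circle} (hU : IsOpen U) {s : Circle}
    (hs : s ∈ U) : ∃ α ∈ dCircleBasis, s ∈ α.carrier ∧ α.carrier ⊆ U := by
  obtain ⟨θ, rfl⟩ : ∃ θ, Circle.exp θ = s := ⟨_, Circle.exp_arg s⟩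
  obtain ⟨ε, hε, hball⟩ :=
    Metric.mem_nhds_iff.1 ((hU.preimage Circle.exp.continuous).mem_nhds hs)
  set δ := min ε 1
  have hδ : 0 < δ := lt_min hε one_pos
  refine ⟨arcOSet (θ - δ) (θ + δ), arcOSet_mem_dCircleBasis (by linarith) ?_,
    mem_image_of_mem _ ⟨by linarith, by linarith⟩, ?_⟩
  · linarith [min_le_right ε 1, Real.pi_gt_three]
  · rintro _ ⟨y, hy, rfl⟩
    apply hball
    rw [Real.ball_eq_Ioo]
    exact ⟨by linarith [hy.1, min_le_left ε 1], by linarith [hy.2, min_le_left ε 1]⟩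

lemma exists_mem_dCircleBasis (s : Circle) : ∃ α ∈ dCircleBasis, s ∈ α.carrier := by
  obtain ⟨α, hα, hs, -⟩ := exists_mem_dCircleBasis_subset_of_mem_open isOpen_univ (mem_univ s)
  exact ⟨α, hα, hs⟩

theorem dCircleBasis_isOrderedBasis : IsOrderedBasis dCircleBasis := by
  refine .of_laxSub ?_ ?_ ?_
  · rintro _ ⟨a, b, -, h, rfl⟩
    exact arcOSet_isPoset h
  · refine TopologicalSpace.isTopologicalBasis_of_isOpen_of_nhds ?_ fun s U hs hU => ?_
    · rintro _ ⟨_, ⟨a, b, -, -, rfl⟩, rfl⟩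
      exact isOpen_arcOSet_carrier a b
    · obtain ⟨α, hα, hsα, hαU⟩ := exists_mem_dCircleBasis_subset_of_mem_open hU hs
      exact ⟨α.carrier, mem_image_of_mem _ hα, hsα, hαU⟩
  · rintro s _ ⟨a, b, -, h, rfl⟩ _ ⟨a', b', -, h', rfl⟩ hs hs'
    obtain ⟨θ, rfl⟩ : ∃ θ, Circle.exp θ = s := ⟨_, Circle.exp_arg s⟩
    obtain ⟨c, d, hcd, hlen, hθ⟩ := exists_arcOSet_eq_of_exp_mem hs
    obtain ⟨c', d', hcd', hlen', hθ'⟩ := exists_arcOSet_eq_of_exp_mem hs'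
    rw [← hcd, ← hcd']
    refine ⟨arcOSet (max c c') (min d d'), arcOSet_mem_dCircleBasis ?_ ?_,
      mem_image_of_mem _ ⟨max_lt hθ.1 hθ'.1, lt_min hθ.2 hθ'.2⟩,
      arcOSet_laxSub_of_le (le_max_left c c') (min_le_left d d'),
      arcOSet_laxSub_of_le (le_max_right c c') (min_le_right d d')⟩
    · linarith [max_lt hθ.1 hθ'.1, lt_min hθ.2 hθ'.2]
    · linarith [le_max_left c c', min_le_left d d']

lemma nonempty_of_mem_dCircleBasis {α : OSet Circle} (hα : α ∈ dCircleBasis) :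
    α.carrier.Nonempty := by
  obtain ⟨a, b, h, -, rfl⟩ := hα
  exact ⟨_, mem_image_of_mem _ (show (a + b) / 2 ∈ Ioo a b from ⟨by linarith, by linarith⟩)⟩

end DirectedCircle

section LocallyIncreasingLoops

lemma rel_of_le_of_locally_rel {r : ℝ → ℝ → Prop} (htrans : ∀ x y z, r x y → r y z → r x z)
    (hloc : ∀ x, ∃ ε > 0, ∀ y ∈ Ioo (x - ε) (x + ε), ∀ z ∈ Ioo (x - ε) (x + ε), y ≤ z → r y z)
    {x z : ℝ} (hxz : x ≤ z) : r x z := by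
  set S := {w | w ≤ z ∧ r x w}
  have hxS : x ∈ S := by
    obtain ⟨ε, hε, hx⟩ := hloc x
    exact ⟨hxz, hx x ⟨by linarith, by linarith⟩ x ⟨by linarith, by linarith⟩ le_rfl⟩
  have hbdd : BddAbove S := ⟨z, fun w hw => hw.1⟩
  set m := sSup S
  obtain ⟨ε, hε, hm⟩ := hloc m
  have hmball : m ∈ Ioo (m - ε) (m + ε) := ⟨by linarith, by linarith⟩
  obtain ⟨w, hwS, hw⟩ := exists_lt_of_lt_csSup ⟨x, hxS⟩ (sub_lt_self m hε)
  have hwm : w ≤ m := le_csSup hbdd hwS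
  have hxm : r x m := htrans _ _ _ hwS.2 (hm w ⟨hw, by linarith⟩ m hmball hwm)
  obtain hmz | hmz := (csSup_le ⟨x, hxS⟩ fun w hw => hw.1 : m ≤ z).lt_or_eq
  · -- A step from `m` to the right would stay in `S`.
    have hmw' : m < min (m + ε / 2) z := lt_min (by linarith) hmz
    have hw'S : min (m + ε / 2) z ∈ S := ⟨min_le_right _ _, htrans _ _ _ hxm <|
      hm m hmball _ ⟨by linarith, by linarith [min_le_left (m + ε / 2) z]⟩ hmw'.le⟩
    linarith [le_csSup hbdd hw'S]
  · exact hmz ▸ hxm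

/-- Going once around the circle in either direction gives `h 1 ≤ h σ ≤ h 1`. -/
theorem eq_of_forall_exists_arc_le {W : Type w} {B : OSet W} (hB : B.IsPoset) {h : Circle → W}
    (hloc : ∀ σ, ∃ α ∈ dCircleBasis, σ ∈ α.carrier ∧ ∀ p q, α.le p q → B.le (h p) (h q))
    (σ σ' : Circle) : h σ = h σ' := by
  let r : ℝ → ℝ → Prop := fun x y => B.le (h (Circle.exp x)) (h (Circle.exp y))
  have htrans : ∀ x y z, r x y → r y z → r x z := fun x y z => hB.2.2.2 _ _ _
  have hlocr : ∀ x, ∃ ε > 0, ∀ y ∈ Ioo (x - ε) (x + ε), ∀ z ∈ Ioo (x - ε) (x + ε),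
      y ≤ z → r y z := by
    intro x
    obtain ⟨_, ⟨a, b, -, -, rfl⟩, hx, hincr⟩ := hloc (Circle.exp x)
    obtain ⟨a', b', hab, -, hx'⟩ := exists_arcOSet_eq_of_exp_mem hx
    rw [← hab] at hincr
    have hsub : Ioo (x - min (x - a') (b' - x)) (x + min (x - a') (b' - x)) ⊆ Ioo a' b' :=
      Ioo_subset_Ioo (by linarith [min_le_left (x - a') (b' - x)])
        (by linarith [min_le_right (x - a') (b' - x)])
    exact ⟨_, lt_min (by linarith [hx'.1]) (by linarith [hx'.2]), fun y hy z hz hyz =>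
      hincr _ _ (arcOSet_le_of_le (hsub hy) (hsub hz) hyz)⟩
  have hone : ∀ θ : ℝ, θ ∈ Icc (-(2 * π)) (2 * π) → h (Circle.exp θ) = h 1 := by
    intro θ hθ
    have h₁ := rel_of_le_of_locally_rel htrans hlocr hθ.1
    have h₂ := rel_of_le_of_locally_rel htrans hlocr hθ.2
    simp only [r, Circle.exp_neg, Circle.exp_two_pi, inv_one] at h₁ h₂
    exact hB.2.2.1 _ _ h₂ h₁
  have hmem : ∀ z : Circle, h z = h 1 := fun z => by
    rw [← Circle.exp_arg z]
    exact hone _ ⟨by linarith [Real.pi_pos, Complex.neg_pi_lt_arg z],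
      by linarith [Complex.arg_le_pi z, Real.pi_pos]⟩
  rw [hmem σ, hmem σ']

end LocallyIncreasingLoops

section Kset

variable {X : Type u} [TopologicalSpace X] {𝔅 : Set (OSet X)} {W : Type w} [TopologicalSpace W]

lemma isClosed_Kset [T2Space W] {f : Circle × X → W} (hf : Continuous f) :
    IsClosed (Kset f) := by
  have h : Kset f = ⋂ s : Circle, {t | f (s, t) = f (1, t)} := by
    ext t
    simp only [Kset, mem_ofPred_eq, mem_iInter]
    exact ⟨fun h s => h s 1, fun h s s' => (h s).trans (h s').symm⟩
  rw [h]
  exact isClosed_iInter fun s => isClosed_eq (by fun_prop) (by fun_prop)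

/-- The basis elements through the circle `S¹ × {t}` cover a tube `S¹ × N`, and on each circle
`S¹ × {τ} ⊆ S¹ × N` the map `f` is locally increasing into one poset of the target. -/
lemma isOpen_Kset (h𝔅 : IsOrderedBasis 𝔅) {𝔚 : Set (OSet W)} (h𝔚 : IsOrderedBasis 𝔚)
    {f : Circle × X → W} (hf : LocIncr (prodBasis dCircleBasis 𝔅) 𝔚 f) : IsOpen (Kset f) := by
  refine isOpen_iff_forall_mem_open.2 fun t ht => ?_
  obtain ⟨B', hB', hftB', -⟩ := h𝔚.exists_subset_of_mem_open isOpen_univ (mem_univ (f (1, t)))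
  choose C hC hsC _ hincr using fun s : Circle => hf (s, t) B' hB' (ht s 1 ▸ hftB')
  have hCopen : ∀ s, IsOpen (C s).carrier := fun s =>
    (isTopologicalBasis_prodBasis dCircleBasis_isOrderedBasis.isBasis h𝔅.isBasis).isOpen
      (mem_image_of_mem _ (hC s))
  obtain ⟨U, N, -, hN, hU, htN, hsub⟩ := generalized_tube_lemma isCompact_univ isCompact_singleton
    (isOpen_iUnion hCopen) fun x hx => mem_iUnion.2 ⟨x.1, by
      rw [show x = (x.1, t) from Prod.ext rfl hx.2]; exact hsC x.1⟩
  refine ⟨N, fun τ hτ => eq_of_forall_exists_arc_le (h𝔚.isPoset B' hB') fun σ => ?_,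
    hN, htN rfl⟩
  obtain ⟨s, hs⟩ := mem_iUnion.1 (hsub (mk_mem_prod (hU (mem_univ σ)) hτ))
  obtain ⟨α, hα, B, hB, hCs⟩ := hC s
  have hincr := hincr s
  rw [hCs] at hs hincr
  exact ⟨α, hα, hs.1, fun p q hpq => hincr (p, τ) (q, τ) ⟨hpq, h𝔅.le_refl hB hs.2⟩⟩

lemma isClopen_Kset [T2Space W] (h𝔅 : IsOrderedBasis 𝔅) {𝔚 : Set (OSet W)}
    (h𝔚 : IsOrderedBasis 𝔚) {f : Circle × X → W}
    (hf : LocIncr (prodBasis dCircleBasis 𝔅) 𝔚 f) : IsClopen (Kset f) :=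
  ⟨isClosed_Kset <| hf.continuous
      (fun _ hC => (isTopologicalBasis_prodBasis dCircleBasis_isOrderedBasis.isBasis
        h𝔅.isBasis).isOpen (mem_image_of_mem _ hC)) h𝔚.isBasis,
    isOpen_Kset h𝔅 h𝔚 hf⟩

end Kset

lemma mem_Kset_of_comp_eq {X : Type u} {W : Type w} {f : Circle × X → W} {star : X}
    (hf : f ∘ (fun s : Circle => (s, star)) = f ∘ fun _ : Circle => ((1 : Circle), star)) :
    star ∈ Kset f :=
  fun s s' => (congrFun hf s).trans (congrFun hf s').symm

lemma Kset_subset_Kset_comp {X : Type u} {W : Type w} {W' : Type v} (f : Circle × X → W)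
    (h : W → W') : Kset f ⊆ Kset (h ∘ f) :=
  fun _ ht s s' => congrArg h (ht s s')

section XO

variable {X : Type u} {O : Set X}

lemma qO_of_mem {t : X} (ht : t ∈ O) (s : Circle) : qO O (s, t) = Sum.inl ⟨t, ht⟩ :=
  dif_pos ht

lemma qO_of_notMem {t : X} (ht : t ∉ O) (s : Circle) : qO O (s, t) = Sum.inr (s, ⟨t, ht⟩) :=
  dif_neg ht

lemma qO_eq_qO_of_mem {t : X} (ht : t ∈ O) (s s' : Circle) : qO O (s, t) = qO O (s', t) := by
  rw [qO_of_mem ht, qO_of_mem ht]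

lemma qO_surjective : Function.Surjective (qO O) := by
  rintro (⟨t, ht⟩ | ⟨s, t, ht⟩)
  · exact ⟨(1, t), qO_of_mem ht 1⟩
  · exact ⟨(s, t), qO_of_notMem ht s⟩

@[simp]
lemma XO.p2_qO (x : Circle × X) : XO.p2 (qO O x) = x.2 := by
  obtain ⟨s, t⟩ := x
  by_cases ht : t ∈ O
  · rw [qO_of_mem ht]; rfl
  · rw [qO_of_notMem ht]; rfl

lemma inl_mem_USet {αc : Set Circle} {A : Set X} {t : ↥O} :
    (Sum.inl t : XO X O) ∈ USet O αc A ↔ (t : X) ∈ A := by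
  refine ⟨?_, fun h => Or.inl ⟨t, h, rfl⟩⟩
  rintro (⟨_, h, ⟨⟩⟩ | ⟨_, -, ⟨⟩⟩)
  exact h

lemma inr_mem_USet {αc : Set Circle} {A : Set X} {p : Circle × ↥(Oᶜ)} :
    (Sum.inr p : XO X O) ∈ USet O αc A ↔ p.1 ∈ αc ∧ (p.2 : X) ∈ A := by
  refine ⟨?_, fun h => Or.inr ⟨p, h, rfl⟩⟩
  rintro (⟨_, -, ⟨⟩⟩ | ⟨_, h, ⟨⟩⟩)
  exact h

lemma qO_mem_USet {αc : Set Circle} {A : Set X} {s : Circle} {t : X} (hs : s ∈ αc)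
    (ht : t ∈ A) : qO O (s, t) ∈ USet O αc A := by
  by_cases htO : t ∈ O
  · rw [qO_of_mem htO]; exact inl_mem_USet.2 ht
  · rw [qO_of_notMem htO]; exact inr_mem_USet.2 ⟨hs, ht⟩

lemma qO_mem_USet_of_mem {αc : Set Circle} {A : Set X} (s : Circle) {t : X} (ht : t ∈ O)
    (htA : t ∈ A) : qO O (s, t) ∈ USet O αc A := by
  rw [qO_of_mem ht]
  exact inl_mem_USet.2 htA

lemma qO_image_prod {αc : Set Circle} (hαc : αc.Nonempty) (A : Set X) :
    qO O '' (αc ×ˢ A) = USet O αc A := by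
  refine subset_antisymm (image_subset_iff.2 fun x hx => qO_mem_USet hx.1 hx.2) ?_
  rintro (t | ⟨s, t⟩) ht
  · obtain ⟨σ, hσ⟩ := hαc
    exact ⟨(σ, t), ⟨hσ, inl_mem_USet.1 ht⟩, qO_of_mem t.2 σ⟩
  · exact ⟨(s, t), inr_mem_USet.1 ht, qO_of_notMem t.2 s⟩

lemma qO_eq_inr {x : Circle × X} {s : Circle} {τ : ↥(Oᶜ)} (h : qO O x = Sum.inr (s, τ)) :
    x = (s, (τ : X)) := by
  obtain ⟨s₀, t⟩ := x
  by_cases ht : t ∈ O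
  · rw [qO_of_mem ht] at h; cases h
  · rw [qO_of_notMem ht] at h
    cases h
    rfl

lemma XO.eq_or_exists_inr_of_p2_eq {u v : XO X O} (h : XO.p2 u = XO.p2 v) :
    u = v ∨ ∃ s s' τ, u = Sum.inr (s, τ) ∧ v = Sum.inr (s', τ) := by
  rcases u with t | ⟨s, t⟩ <;> rcases v with t' | ⟨s', t'⟩
  · exact Or.inl (congrArg Sum.inl (Subtype.ext h))
  · exact absurd ((show (t : X) = t' from h) ▸ t.2) t'.2
  · exact absurd ((show (t' : X) = t from h.symm) ▸ t'.2) t.2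
  · obtain rfl : t = t' := Subtype.ext h
    exact Or.inr ⟨s, s', t, rfl, rfl⟩

variable [TopologicalSpace X]

lemma XO.continuous_p2 : Continuous (XO.p2 : XO X O → X) :=
  continuous_coinduced_dom.2 <| by
    convert continuous_snd using 1
    exact funext XO.p2_qO

lemma isOpen_USet (hO : IsClopen O) {αc : Set Circle} (hαc : IsOpen αc) {A : Set X}
    (hA : IsOpen A) : IsOpen (USet O αc A) := by
  have hpre : qO O ⁻¹' USet O αc A = (univ ×ˢ (A ∩ O)) ∪ (αc ×ˢ (A ∩ Oᶜ)) := by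
    ext ⟨s, t⟩
    by_cases ht : t ∈ O
    · rw [mem_preimage, qO_of_mem ht]
      exact inl_mem_USet.trans (by simp [ht])
    · rw [mem_preimage, qO_of_notMem ht]
      exact inr_mem_USet.trans (by simp [ht])
  exact isOpen_coinduced.2 <| hpre ▸
    (isOpen_univ.prod (hA.inter hO.2)).union (hαc.prod (hA.inter hO.1.isOpen_compl))

lemma XO.t2Space [T2Space X] (hO : IsClopen O) : T2Space (XO X O) := by
  refine ⟨fun u v huv => ?_⟩
  by_cases h : XO.p2 u = XO.p2 v
  swap
  · exact separated_by_continuous XO.continuous_p2 h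
  obtain huv' | ⟨s, s', τ, rfl, rfl⟩ := XO.eq_or_exists_inr_of_p2_eq h
  · exact absurd huv' huv
  obtain ⟨U, V, hU, hV, hsU, hs'V, hUV⟩ :=
    t2_separation fun hs => huv (congrArg (fun σ => Sum.inr (σ, τ)) hs)
  refine ⟨USet O U Oᶜ, USet O V Oᶜ, isOpen_USet hO hU hO.1.isOpen_compl,
    isOpen_USet hO hV hO.1.isOpen_compl, inr_mem_USet.2 ⟨hsU, τ.2⟩,
    inr_mem_USet.2 ⟨hs'V, τ.2⟩, disjoint_left.2 ?_⟩
  rintro (w | w) hw hw'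
  · exact (inl_mem_USet.1 hw) w.2
  · exact disjoint_left.1 hUV (inr_mem_USet.1 hw).1 (inr_mem_USet.1 hw').1

end XO

section UOSet

open Relation

variable {X : Type u} {O : Set X} {α : OSet Circle} {A : OSet X}

lemma leOne.p2_le {u v : XO X O} (h : leOne O α A u v) : A.le (XO.p2 u) (XO.p2 v) := by
  obtain ⟨x, x', -, hA, rfl, rfl⟩ := h
  simpa using hA

lemma leOne.mem_USet (hα : α.IsPoset) (hA : A.IsPoset) {u v : XO X O} (h : leOne O α A u v) :
    u ∈ USet O α.carrier A.carrier ∧ v ∈ USet O α.carrier A.carrier := by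
  obtain ⟨x, x', hαx, hAx, rfl, rfl⟩ := h
  exact ⟨qO_mem_USet (hα.1 _ _ hαx).1 (hA.1 _ _ hAx).1,
    qO_mem_USet (hα.1 _ _ hαx).2 (hA.1 _ _ hAx).2⟩

lemma transGen_leOne_p2_le (hA : A.IsPoset) {u v : XO X O} (h : TransGen (leOne O α A) u v) :
    A.le (XO.p2 u) (XO.p2 v) := by
  induction h with
  | single h => exact h.p2_le
  | tail _ h ih => exact hA.2.2.2 _ _ _ ih h.p2_le

/-- A chain between two points of one circle fibre over `X ∖ O` stays in that fibre (second
coordinates increase and `A` is antisymmetric), where `≤¹` only moves along `α`. -/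
lemma transGen_leOne_inr (hα : α.IsPoset) (hA : A.IsPoset) {u w : XO X O}
    (h : TransGen (leOne O α A) u w) {s s' : Circle} {τ : ↥(Oᶜ)} (hu : u = Sum.inr (s, τ))
    (hw : w = Sum.inr (s', τ)) : α.le s s' := by
  induction h using TransGen.head_induction_on generalizing s with
  | single h =>
    obtain ⟨x, x', hαx, -, hx, hx'⟩ := h
    rw [hu] at hx; rw [hw] at hx'
    rw [qO_eq_inr hx, qO_eq_inr hx'] at hαx
    exact hαx
  | head h hvw ih =>
    obtain ⟨x, x', hαx, hAx, hx, rfl⟩ := h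
    obtain rfl := qO_eq_inr (hx.trans hu)
    have hx'w := transGen_leOne_p2_le hA hvw
    rw [hw, XO.p2_qO] at hx'w
    have hτ : x'.2 = τ := hA.2.2.1 _ _ hx'w hAx
    have hv : qO O x' = Sum.inr (x'.1, τ) := by
      rw [← qO_of_notMem τ.2 x'.1, ← hτ]
    exact hα.2.2.2 _ _ _ hαx (ih hv)

theorem UOSet_isPoset (hα : α.IsPoset) (hA : A.IsPoset) (hne : α.carrier.Nonempty) :
    (UOSet O α A).IsPoset := by
  refine ⟨fun u v h => ?_, fun u hu => ?_, fun u v huv hvu => ?_,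
    fun u v w => TransGen.trans⟩
  · induction h with
    | single h => exact h.mem_USet hα hA
    | tail _ h ih => exact ⟨ih.1, (h.mem_USet hα hA).2⟩
  · obtain ⟨x, hx, rfl⟩ : u ∈ qO O '' (α.carrier ×ˢ A.carrier) := qO_image_prod hne _ ▸ hu
    exact TransGen.single ⟨x, x, hα.2.1 _ hx.1, hA.2.1 _ hx.2, rfl, rfl⟩
  · obtain h | ⟨s, s', τ, rfl, rfl⟩ := XO.eq_or_exists_inr_of_p2_eq
      (hA.2.2.1 _ _ (transGen_leOne_p2_le hA huv) (transGen_leOne_p2_le hA hvu))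
    · exact h
    · rw [hα.2.2.1 _ _ (transGen_leOne_inr hα hA huv rfl rfl)
        (transGen_leOne_inr hα hA hvu rfl rfl)]

lemma leOne_qO_of_mem {x x' : Circle × X} (hx : x.2 ∈ O) (hx' : x'.2 ∈ O)
    (hA : A.le x.2 x'.2) {σ : Circle} (hσ : α.le σ σ) : leOne O α A (qO O x) (qO O x') :=
  ⟨(σ, x.2), (σ, x'.2), hσ, hA, qO_eq_qO_of_mem hx _ _, qO_eq_qO_of_mem hx' _ _⟩

variable {α' : OSet Circle} {A' : OSet X}

lemma UOSet_laxSub (hα : α.laxSub α') (hA : A.laxSub A') :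
    (UOSet O α A).laxSub (UOSet O α' A') := by
  refine ⟨?_, TransGen.mono fun u v ⟨x, x', hαx, hAx, hx, hx'⟩ =>
    ⟨x, x', hα.2 _ _ hαx, hA.2 _ _ hAx, hx, hx'⟩⟩
  rintro (t | p) h
  · exact inl_mem_USet.2 (hA.1 (inl_mem_USet.1 h))
  · exact inr_mem_USet.2 ⟨hα.1 (inr_mem_USet.1 h).1, hA.1 (inr_mem_USet.1 h).2⟩

/-- Over `O` the circle coordinate is collapsed, so any arc `α'` with a point can replace `α`. -/
lemma UOSet_laxSub_of_subset (hA : A.IsPoset) (hAO : A.carrier ⊆ O) (hAA' : A.laxSub A')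
    {σ : Circle} (hσ : α'.le σ σ) : (UOSet O α A).laxSub (UOSet O α' A') := by
  refine ⟨?_, TransGen.mono fun u v ⟨x, x', _, hAx, hx, hx'⟩ => ?_⟩
  · rintro (t | p) h
    · exact inl_mem_USet.2 (hAA'.1 (inl_mem_USet.1 h))
    · exact absurd (hAO (inr_mem_USet.1 h).2) p.2.2
  · rw [← hx, ← hx']
    exact leOne_qO_of_mem (hAO (hA.1 _ _ hAx).1) (hAO (hA.1 _ _ hAx).2) (hAA'.2 _ _ hAx) hσ

end UOSet

/-- The `U_{α,B}` with `B ∈ 𝔅` only: an open poset need not be a poset, so `XOBasis 𝔅 O` itself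
need not be an ordered basis. -/
def XOPosetBasis {X : Type u} (𝔅 : Set (OSet X)) (O : Set X) : Set (OSet (XO X O)) :=
  {C | ∃ α ∈ dCircleBasis, ∃ B ∈ 𝔅, C = UOSet O α B}

lemma XOPosetBasis_subset_XOBasis {X : Type u} {𝔅 : Set (OSet X)} {O : Set X} :
    XOPosetBasis 𝔅 O ⊆ XOBasis 𝔅 O := by
  rintro _ ⟨_, ⟨a, b, h₀, h₁, rfl⟩, B, hB, rfl⟩
  exact ⟨a, b, h₀, h₁, B, basis_mem_openPosets hB, rfl⟩

section XOPosetBasis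

variable {X : Type u} [TopologicalSpace X] {𝔅 : Set (OSet X)} {O : Set X}

lemma exists_prod_subset_preimage_qO (h𝔅 : IsOrderedBasis 𝔅) {V : Set (XO X O)}
    (hV : IsOpen (qO O ⁻¹' V)) {s : Circle} {t : X} (hst : qO O (s, t) ∈ V) :
    ∃ α ∈ dCircleBasis, ∃ B ∈ 𝔅, s ∈ α.carrier ∧ t ∈ B.carrier ∧
      α.carrier ×ˢ B.carrier ⊆ qO O ⁻¹' V := by
  by_cases ht : t ∈ O
  · -- The whole fibre over `t` maps to one point; a tube around it does the job.
    have hfibre : univ ×ˢ {t} ⊆ qO O ⁻¹' V := by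
      rintro ⟨s', t'⟩ ⟨-, rfl : t' = t⟩
      rwa [mem_preimage, qO_eq_qO_of_mem ht s' s]
    obtain ⟨U, N, -, hN, hU, htN, hUN⟩ :=
      generalized_tube_lemma isCompact_univ isCompact_singleton hV hfibre
    obtain ⟨B, hB, htB, hBN⟩ := h𝔅.exists_subset_of_mem_open hN (htN rfl)
    obtain ⟨α, hα, hsα⟩ := exists_mem_dCircleBasis s
    exact ⟨α, hα, B, hB, hsα, htB,
      (prod_mono (fun σ _ => hU (mem_univ σ)) hBN).trans hUN⟩
  · obtain ⟨_, ⟨C, ⟨α, hα, B, hB, rfl⟩, rfl⟩, hstC, hCV⟩ :=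
      (isTopologicalBasis_prodBasis dCircleBasis_isOrderedBasis.isBasis
        h𝔅.isBasis).exists_subset_of_mem_open hst hV
    exact ⟨α, hα, B, hB, hstC.1, hstC.2, hCV⟩

lemma isTopologicalBasis_XOPosetBasis (h𝔅 : IsOrderedBasis 𝔅) (hO : IsClopen O) :
    TopologicalSpace.IsTopologicalBasis (OSet.carrier '' XOPosetBasis 𝔅 O) := by
  refine TopologicalSpace.isTopologicalBasis_of_isOpen_of_nhds ?_ fun u V hu hV => ?_
  · rintro _ ⟨_, ⟨α, hα, B, hB, rfl⟩, rfl⟩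
    exact isOpen_USet hO (dCircleBasis_isOrderedBasis.isOpen_carrier hα)
      (h𝔅.isOpen_carrier hB)
  · obtain ⟨⟨s, t⟩, rfl⟩ := qO_surjective u
    obtain ⟨α, hα, B, hB, hs, ht, hsub⟩ := exists_prod_subset_preimage_qO h𝔅 hV hu
    refine ⟨_, mem_image_of_mem _ ⟨α, hα, B, hB, rfl⟩, qO_mem_USet hs ht, ?_⟩
    rw [UOSet, ← qO_image_prod (nonempty_of_mem_dCircleBasis hα)]
    exact image_subset_iff.2 hsub

theorem XOPosetBasis_isOrderedBasis (h𝔅 : IsOrderedBasis 𝔅) (hO : IsClopen O) :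
    IsOrderedBasis (XOPosetBasis 𝔅 O) := by
  have h𝔇 := dCircleBasis_isOrderedBasis
  refine .of_laxSub ?_ (isTopologicalBasis_XOPosetBasis h𝔅 hO) ?_
  · rintro _ ⟨α, hα, B, hB, rfl⟩
    exact UOSet_isPoset (h𝔇.isPoset α hα) (h𝔅.isPoset B hB) (nonempty_of_mem_dCircleBasis hα)
  rintro u _ ⟨α, hα, B, hB, rfl⟩ _ ⟨α', hα', B', hB', rfl⟩ hu hu'
  rcases u with t | ⟨s, τ⟩
  · obtain ⟨B₁, hB₁, htB₁, hB₁B, hB₁B'⟩ :=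
      h𝔅.exists_laxSub_laxSub hB hB' (inl_mem_USet.1 hu) (inl_mem_USet.1 hu')
    obtain ⟨B₂, hB₂, htB₂, hB₂O, hB₂B₁⟩ :=
      h𝔅.exists_laxSub_subset_of_mem_open hB₁ hO.isOpen htB₁ t.2
    obtain ⟨σ, hσ⟩ := nonempty_of_mem_dCircleBasis hα
    obtain ⟨σ', hσ'⟩ := nonempty_of_mem_dCircleBasis hα'
    have hB₂poset := h𝔅.isPoset B₂ hB₂
    exact ⟨_, ⟨α, hα, B₂, hB₂, rfl⟩, inl_mem_USet.2 htB₂,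
      UOSet_laxSub_of_subset hB₂poset hB₂O (hB₂B₁.trans hB₁B) (h𝔇.le_refl hα hσ),
      UOSet_laxSub_of_subset hB₂poset hB₂O (hB₂B₁.trans hB₁B') (h𝔇.le_refl hα' hσ')⟩
  · obtain ⟨γ, hγ, hsγ, hγα, hγα'⟩ :=
      h𝔇.exists_laxSub_laxSub hα hα' (inr_mem_USet.1 hu).1 (inr_mem_USet.1 hu').1
    obtain ⟨B₁, hB₁, hτB₁, hB₁B, hB₁B'⟩ :=
      h𝔅.exists_laxSub_laxSub hB hB' (inr_mem_USet.1 hu).2 (inr_mem_USet.1 hu').2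
    exact ⟨_, ⟨γ, hγ, B₁, hB₁, rfl⟩, inr_mem_USet.2 ⟨hsγ, hτB₁⟩,
      UOSet_laxSub hγα hB₁B, UOSet_laxSub hγα' hB₁B'⟩

end XOPosetBasis

section XOLift

variable {X : Type u} {𝔅 : Set (OSet X)} {O : Set X}

noncomputable def XO.lift {W : Type w} (f : Circle × X → W) : XO X O → W :=
  Sum.elim (fun t => f (1, t)) (fun p => f (p.1, p.2))

lemma XO.lift_qO {W : Type w} {f : Circle × X → W} (hK : O ⊆ Kset f) (x : Circle × X) :
    XO.lift f (qO O x) = f x := by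
  obtain ⟨s, t⟩ := x
  by_cases ht : t ∈ O
  · rw [qO_of_mem ht]
    exact hK ht 1 s
  · rw [qO_of_notMem ht]
    rfl

lemma XO.lift_locIncr {W : Type w} {𝔚 : Set (OSet W)} (h𝔚 : ∀ B' ∈ 𝔚, B'.IsPoset)
    {f : Circle × X → W} (hf : LocIncr (prodBasis dCircleBasis 𝔅) 𝔚 f) (hK : O ⊆ Kset f) :
    LocIncr (XOPosetBasis 𝔅 O) 𝔚 (XO.lift f) := by
  intro u B' hB' hu
  obtain ⟨x, rfl⟩ := qO_surjective u
  rw [XO.lift_qO hK] at hu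
  obtain ⟨_, ⟨α, hα, B, hB, rfl⟩, hx, hmaps, hincr⟩ := hf x B' hB' hu
  refine ⟨UOSet O α B, ⟨α, hα, B, hB, rfl⟩, qO_mem_USet hx.1 hx.2, ?_, fun v w hvw => ?_⟩
  · rw [UOSet, ← qO_image_prod (nonempty_of_mem_dCircleBasis hα)]
    rintro _ ⟨y, hy, rfl⟩
    rw [XO.lift_qO hK]
    exact hmaps y hy
  · have hstep : ∀ v w, leOne O α B v w → B'.le (XO.lift f v) (XO.lift f w) := by
      rintro _ _ ⟨y, y', hαy, hBy, rfl, rfl⟩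
      rw [XO.lift_qO hK, XO.lift_qO hK]
      exact hincr y y' ⟨hαy, hBy⟩
    induction hvw with
    | single h => exact hstep _ _ h
    | tail _ h ih => exact (h𝔚 B' hB').2.2.2 _ _ _ ih (hstep _ _ h)

lemma Kset_qO : Kset (qO O) = O := by
  refine subset_antisymm (fun t ht => ?_) fun t ht s s' => qO_eq_qO_of_mem ht s s'
  by_contra htO
  have h := ht (Circle.exp π) 1
  rw [qO_of_notMem htO, qO_of_notMem htO] at h
  exact Circle.exp_pi_ne_one (Prod.mk.inj (Sum.inr.inj h)).1

lemma qO_comp_eq {star : X} (hstar : star ∈ O) :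
    qO O ∘ (fun s : Circle => (s, star)) = qO O ∘ fun _ : Circle => ((1 : Circle), star) :=
  funext fun s => qO_eq_qO_of_mem hstar s 1

end XOLift

section Coequalizer

variable {X : Type u} [TopologicalSpace X] {𝔅 : Set (OSet X)} {O : Set X}

theorem qO_locIncr (h𝔅 : IsOrderedBasis 𝔅) (hO : IsOpen O) :
    LocIncr (prodBasis dCircleBasis 𝔅) (XOBasis 𝔅 O) (qO O) := by
  rintro ⟨s, t⟩ _ ⟨a, b, h₀, h₁, A, hA, rfl⟩ hst
  by_cases ht : t ∈ O
  · -- Over `O`, shrink the `X`-factor into `O`, where the circle coordinate is collapsed.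
    rw [qO_of_mem ht] at hst
    obtain ⟨B₁, hB₁, htB₁, hB₁A⟩ := hA t (inl_mem_USet.1 hst)
    obtain ⟨B₂, hB₂, htB₂, hB₂O, hB₂B₁⟩ := h𝔅.exists_laxSub_subset_of_mem_open hB₁ hO htB₁ ht
    obtain ⟨α, hα, hsα⟩ := exists_mem_dCircleBasis s
    obtain ⟨σ, hσ⟩ := nonempty_of_mem_dCircleBasis (arcOSet_mem_dCircleBasis h₀ h₁)
    have hB₂A := hB₂B₁.trans hB₁A
    refine ⟨α.prod B₂, ⟨α, hα, B₂, hB₂, rfl⟩, ⟨hsα, htB₂⟩,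
      fun p hp => qO_mem_USet_of_mem p.1 (hB₂O hp.2) (hB₂A.1 hp.2), fun p q hpq => ?_⟩
    have hpq' := (h𝔅.isPoset B₂ hB₂).1 _ _ hpq.2
    exact .single (leOne_qO_of_mem (hB₂O hpq'.1) (hB₂O hpq'.2) (hB₂A.2 _ _ hpq.2)
      ((arcOSet_isPoset h₁).2.1 σ hσ))
  · rw [qO_of_notMem ht] at hst
    obtain ⟨hs, htA⟩ := inr_mem_USet.1 hst
    obtain ⟨B₁, hB₁, htB₁, hB₁A⟩ := hA t htA
    exact ⟨(arcOSet a b).prod B₁, ⟨_, arcOSet_mem_dCircleBasis h₀ h₁, B₁, hB₁, rfl⟩, ⟨hs, htB₁⟩,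
      fun p hp => qO_mem_USet hp.1 (hB₁A.1 hp.2),
      fun p q hpq => .single ⟨p, q, hpq.1, hB₁A.2 _ _ hpq.2, rfl, rfl⟩⟩

noncomputable def XO.locOrdSpace (h𝔅 : IsOrderedBasis 𝔅) (hO : IsClopen O) : LocOrdSpace.{u} :=
  ⟨XO X O, XO.topology O, XOPosetBasis 𝔅 O, XOPosetBasis_isOrderedBasis h𝔅 hO⟩

variable {star : X}

/-- `ℭ` may be anything between `XOPosetBasis 𝔅 O`, which makes `X_O` an object, and
`XOBasis 𝔅 O`, the basis of the statement. -/
theorem isCoeqIn_qO (h𝔅 : IsOrderedBasis 𝔅) (hO : IsClopen O) (hstar : star ∈ O)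
    (hmin : ∀ U : Set X, IsClopen U → star ∈ U → O ⊆ U) {ℭ : Set (OSet (XO X O))}
    (hℭ₁ : XOPosetBasis 𝔅 O ⊆ ℭ) (hℭ₂ : ℭ ⊆ XOBasis 𝔅 O) :
    IsCoeqIn (fun Y : LocOrdSpace.{u} => @T2Space Y.carrier Y.top)
      (prodBasis dCircleBasis 𝔅) ℭ
      (fun s : Circle => (s, star)) (fun _ : Circle => ((1 : Circle), star)) (qO O) := by
  refine ⟨(qO_locIncr h𝔅 hO.isOpen).anti_target hℭ₂, qO_comp_eq hstar,
    fun Y hY f hf hfc => ?_⟩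
  let _ := Y.top
  have hK : O ⊆ Kset f := hmin _ (isClopen_Kset h𝔅 Y.isBasis hf) (mem_Kset_of_comp_eq hfc)
  have hfac : f = XO.lift f ∘ qO O := funext fun x => (XO.lift_qO hK x).symm
  refine ⟨XO.lift f, ⟨(XO.lift_locIncr Y.isBasis.isPoset hf hK).mono_source hℭ₁, hfac⟩,
    fun h ⟨_, hh⟩ => qO_surjective.injective_comp_right (hh.symm.trans hfac)⟩

theorem Kset_subset_of_isCoeqIn [T2Space X] (h𝔅 : IsOrderedBasis 𝔅) {C : Type u}
    {ℭ : Set (OSet C)} {g : Circle × X → C}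
    (hg : IsCoeqIn (fun Y : LocOrdSpace.{u} => @T2Space Y.carrier Y.top)
      (prodBasis dCircleBasis 𝔅) ℭ
      (fun s : Circle => (s, star)) (fun _ : Circle => ((1 : Circle), star)) g)
    {U : Set X} (hU : IsClopen U) (hstar : star ∈ U) : Kset g ⊆ U := by
  obtain ⟨h, ⟨-, hfac⟩, -⟩ := hg.2.2 (XO.locOrdSpace h𝔅 hU) (XO.t2Space hU) (qO U)
    ((qO_locIncr h𝔅 hU.isOpen).anti_target XOPosetBasis_subset_XOBasis) (qO_comp_eq hstar)
  exact fun t ht =>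
    Kset_qO.subset (show t ∈ Kset (qO U) from hfac ▸ Kset_subset_Kset_comp g h ht)

end Coequalizer

/-- In the category of locally ordered spaces with Hausdorff
underlying topology, the pair `i⋆, c⋆ : S¹ → S⃗¹ × X` (for `X` Hausdorff) has a
coequalizer iff the family of clopen neighbourhoods of `⋆` has a smallest
element `O`; in that case `q_O` is the coequalizer. -/
theorem stmt15 {X : Type u} [TopologicalSpace X] [T2Space X] (𝔅 : Set (OSet X))
    (h𝔅 : IsOrderedBasis 𝔅) (star : X) :
    ((∃ (C : LocOrdSpace.{u}) (g : Circle × X → C.carrier),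
        (@T2Space C.carrier C.top) ∧
        IsCoeqIn (fun Y : LocOrdSpace.{u} => @T2Space Y.carrier Y.top)
          (prodBasis dCircleBasis 𝔅) C.basis
          (fun s : Circle => (s, star)) (fun _ : Circle => ((1 : Circle), star)) g) ↔
      ∃ O : Set X, (IsClopen O ∧ star ∈ O) ∧
        ∀ U : Set X, IsClopen U → star ∈ U → O ⊆ U) ∧
    ∀ O : Set X, IsClopen O → star ∈ O → (∀ U : Set X, IsClopen U → star ∈ U → O ⊆ U) →
      T2Space (XO X O) ∧
      IsCoeqIn (fun Y : LocOrdSpace.{u} => @T2Space Y.carrier Y.top)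
        (prodBasis dCircleBasis 𝔅) (XOBasis 𝔅 O)
        (fun s : Circle => (s, star)) (fun _ : Circle => ((1 : Circle), star)) (qO O) := by
  refine ⟨⟨?_, ?_⟩, fun O hO hstar hmin => ⟨XO.t2Space hO,
    isCoeqIn_qO h𝔅 hO hstar hmin XOPosetBasis_subset_XOBasis subset_rfl⟩⟩
  · rintro ⟨C, g, hC, hg⟩
    let _ := C.top
    exact ⟨Kset g, ⟨isClopen_Kset h𝔅 C.isBasis hg.1, mem_Kset_of_comp_eq hg.2.1⟩,
      fun U hU hstar => Kset_subset_of_isCoeqIn h𝔅 hg hU hstar⟩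
  · rintro ⟨O, ⟨hO, hstar⟩, hmin⟩
    exact ⟨XO.locOrdSpace h𝔅 hO, qO O, XO.t2Space hO,
      isCoeqIn_qO h𝔅 hO hstar hmin subset_rfl XOPosetBasis_subset_XOBasis⟩
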